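/- Let k be a field, C a coassociative counital k-coalgebra, A an associative unital k-algebra with a coassociative counital k-linear coaction ρ : A → A ⊗ C, B the coinvariant subalgebra, and suppose the canonical left A-linear map β : A ⊗_B A → A ⊗ C, induced by a ⊗ a' ↦ (a ⊗ 1) · ρ(a'), is bijective (i.e. A/B is a C-Galois extension). Let γ : C → A ⊗_B A be the k-linear map γ(c) = β⁻¹(1 ⊗ c). For b ∈ A define the k-linear map m_b : A ⊗ C → A ⊗ C as the unique linear map sending x ⊗ c to (x ⊗ 1) · β(γ(c) · b), where γ(c) · b denotes the right A-action on A ⊗_B A by multiplication on the second tensor factor, and (x ⊗ 1)· denotes left multiplication by x on the first tensor factor of A ⊗ C. Then β intertwines the right A-actions: for every u ∈ A ⊗_B A and every b ∈ A, β(u · b) = m_b(β(u)). (In other words, β : A ⊗_B A → A ⊗ C is a map of A-bimodules when A ⊗ C carries the entwined right A-action x ⊗ c ⊸ b = (x ⊗ 1)·ψ(c ⊗ b) with ψ(c ⊗ b) = β(γ(c) b).) -/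
import Mathlib


/-!
STATEMENT 2: Let `A/B` be a `C`-Galois extension, i.e. the canonical map
`β : A ⊗_B A → A ⊗ C`, `a ⊗ a' ↦ (a ⊗ 1) • ρ a'`, is bijective, and let
`γ(c) = β⁻¹(1 ⊗ c)`.  For `b ∈ A` let `m_b : A ⊗ C → A ⊗ C` be the unique linear
map with `m_b (x ⊗ c) = (x ⊗ 1) • β (γ(c) · b)`, where `· b` is the right
`A`-action on `A ⊗_B A` by multiplication on the second factor.  Then `β`
intertwines the right `A`-actions: `β (u · b) = m_b (β u)` for all `u`, `b`.
(`A ⊗_B A` is realized as the quotient of `A ⊗[k] A` by the balanced relations.)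
-/

open TensorProduct

noncomputable section

variable (k : Type) [Field k]
  (A : Type) [Ring A] [Algebra k A]
  (C : Type) [AddCommGroup C] [Module k C] [Coalgebra k C]
  (ρ : A →ₗ[k] A ⊗[k] C)

/-- The coinvariant subset `B`. -/
def coinv : Set A :=
  {b : A | ∀ a : A, ρ (b * a) = (LinearMap.rTensor C (LinearMap.mulLeft k b)) (ρ a)}

/-- The `B`-balanced relations inside `A ⊗[k] A`, whose quotient is `A ⊗_B A`. -/
def balRel : Submodule k (A ⊗[k] A) :=
  Submodule.span k
    {z : A ⊗[k] A | ∃ (a a' b : A), b ∈ coinv k A C ρ ∧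
      z = (a * b) ⊗ₜ[k] a' - a ⊗ₜ[k] (b * a')}

/-- `A ⊗_B A`, realized as a quotient of `A ⊗[k] A`. -/
def QB := (A ⊗[k] A) ⧸ balRel k A C ρ

instance : AddCommGroup (QB k A C ρ) := by unfold QB; infer_instance
instance : Module k (QB k A C ρ) := by unfold QB; infer_instance

/-- The quotient map `A ⊗[k] A → A ⊗_B A`. -/
def mkB : A ⊗[k] A →ₗ[k] QB k A C ρ := (balRel k A C ρ).mkQ

/-- Extensionality for linear maps out of `QB`. -/
lemma qext {W : Type} [AddCommGroup W] [Module k W]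
    (f g : QB k A C ρ →ₗ[k] W)
    (h : ∀ a a' : A, f (mkB k A C ρ (a ⊗ₜ[k] a')) = g (mkB k A C ρ (a ⊗ₜ[k] a'))) :
    f = g := by
  have hcomp : f ∘ₗ mkB k A C ρ = g ∘ₗ mkB k A C ρ := TensorProduct.ext' h
  ext u
  obtain ⟨v, rfl⟩ := (balRel k A C ρ).mkQ_surjective u
  exact LinearMap.congr_fun hcomp v

/-- Right multiplication by `b` on the second factor descends to `QB`. -/
def rbMap (b : A) : QB k A C ρ →ₗ[k] QB k A C ρ :=
  Submodule.mapQ _ _ (LinearMap.lTensor A (LinearMap.mulRight k b)) (by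
    rw [balRel, Submodule.span_le]
    rintro z ⟨a, a', b', hb', rfl⟩
    simp only [SetLike.mem_coe, Submodule.mem_comap, map_sub, LinearMap.lTensor_tmul,
      LinearMap.mulRight_apply]
    exact Submodule.subset_span ⟨a, a' * b, b', hb', by rw [mul_assoc]⟩)

lemma rbMap_mk (b a a' : A) :
    rbMap k A C ρ b (mkB k A C ρ (a ⊗ₜ[k] a')) = mkB k A C ρ (a ⊗ₜ[k] (a' * b)) := by
  rfl

/-- Left multiplication by `x` on the first factor descends to `QB`. -/
def lxMap (x : A) : QB k A C ρ →ₗ[k] QB k A C ρ :=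
  Submodule.mapQ _ _ (LinearMap.rTensor A (LinearMap.mulLeft k x)) (by
    rw [balRel, Submodule.span_le]
    rintro z ⟨a, a', b', hb', rfl⟩
    simp only [SetLike.mem_coe, Submodule.mem_comap, map_sub, LinearMap.rTensor_tmul,
      LinearMap.mulLeft_apply]
    exact Submodule.subset_span ⟨x * a, a', b', hb', by rw [mul_assoc]⟩)

lemma lxMap_mk (x a a' : A) :
    lxMap k A C ρ x (mkB k A C ρ (a ⊗ₜ[k] a')) = mkB k A C ρ ((x * a) ⊗ₜ[k] a') := by
  rfl

theorem beta_intertwines_right_actions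
    (hcoassoc : ∀ a : A,
      (TensorProduct.assoc k A C C) ((LinearMap.rTensor C ρ) (ρ a)) =
        (LinearMap.lTensor A (Coalgebra.comul (R := k) (A := C))) (ρ a))
    (hcounit : ∀ a : A,
      (TensorProduct.rid k A)
        ((LinearMap.lTensor A (Coalgebra.counit (R := k) (A := C))) (ρ a)) = a)
    -- `β` is the canonical (well-defined) Galois map
    (β : QB k A C ρ →ₗ[k] A ⊗[k] C)
    (hβchar : ∀ a a' : A,
      β (mkB k A C ρ (a ⊗ₜ[k] a')) =
        (LinearMap.rTensor C (LinearMap.mulLeft k a)) (ρ a'))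
    -- the Galois condition: `β` is bijective
    (hβ : Function.Bijective β) :
    ∀ b : A,
      -- `· b` : the (well-defined) right `A`-action on `A ⊗_B A`
      ∃ rb : QB k A C ρ →ₗ[k] QB k A C ρ,
        (∀ a a' : A,
          rb (mkB k A C ρ (a ⊗ₜ[k] a')) = mkB k A C ρ (a ⊗ₜ[k] (a' * b))) ∧
        -- `m_b` : the unique linear map with `m_b (x ⊗ c) = (x ⊗ 1) • β (γ c · b)`,
        -- where `γ c = β⁻¹ (1 ⊗ c)`
        ∃ mb : A ⊗[k] C →ₗ[k] A ⊗[k] C,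
          (∀ (x : A) (c : C),
            mb (x ⊗ₜ[k] c) =
              (LinearMap.rTensor C (LinearMap.mulLeft k x))
                (β (rb ((LinearEquiv.ofBijective β hβ).symm ((1 : A) ⊗ₜ[k] c))))) ∧
          (∀ mb' : A ⊗[k] C →ₗ[k] A ⊗[k] C,
            (∀ (x : A) (c : C),
              mb' (x ⊗ₜ[k] c) =
                (LinearMap.rTensor C (LinearMap.mulLeft k x))
                  (β (rb ((LinearEquiv.ofBijective β hβ).symm ((1 : A) ⊗ₜ[k] c))))) →
            mb' = mb) ∧
          -- β intertwines the right A-actions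
          ∀ u : QB k A C ρ, β (rb u) = mb (β u) := by
  intro b
  set e := LinearEquiv.ofBijective β hβ with he
  set rb := rbMap k A C ρ b with hrb
  have hrbmk : ∀ a a' : A,
      rb (mkB k A C ρ (a ⊗ₜ[k] a')) = mkB k A C ρ (a ⊗ₜ[k] (a' * b)) :=
    rbMap_mk k A C ρ b
  -- β intertwines left multiplication
  have hβl : ∀ (x : A) (u : QB k A C ρ),
      β (lxMap k A C ρ x u) = LinearMap.rTensor C (LinearMap.mulLeft k x) (β u) := by
    intro x
    have := qext k A C ρ (β ∘ₗ lxMap k A C ρ x)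
      ((LinearMap.rTensor C (LinearMap.mulLeft k x)) ∘ₗ β) (by
        intro a a'
        simp only [LinearMap.comp_apply, lxMap_mk, hβchar]
        rw [show LinearMap.mulLeft k (x * a) =
            (LinearMap.mulLeft k x).comp (LinearMap.mulLeft k a) from
            LinearMap.mulLeft_mul k A x a,
          LinearMap.rTensor_comp, LinearMap.comp_apply])
    exact fun u => LinearMap.congr_fun this u
  -- rb commutes with left multiplication
  have hcomm : ∀ (x : A) (u : QB k A C ρ),
      rb (lxMap k A C ρ x u) = lxMap k A C ρ x (rb u) := by
    intro x
    have := qext k A C ρ (rb ∘ₗ lxMap k A C ρ x) (lxMap k A C ρ x ∘ₗ rb) (by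
      intro a a'
      simp [lxMap_mk, hrbmk])
    exact fun u => LinearMap.congr_fun this u
  -- β⁻¹ intertwines left multiplication
  have hel : ∀ (x : A) (v : A ⊗[k] C),
      e.symm (LinearMap.rTensor C (LinearMap.mulLeft k x) v) =
        lxMap k A C ρ x (e.symm v) := by
    intro x v
    apply e.injective
    rw [e.apply_symm_apply]
    have : e (lxMap k A C ρ x (e.symm v)) = β (lxMap k A C ρ x (e.symm v)) := rfl
    rw [this, hβl]
    have : β (e.symm v) = e (e.symm v) := rfl
    rw [this, e.apply_symm_apply]
  refine ⟨rb, hrbmk, β ∘ₗ rb ∘ₗ e.symm.toLinearMap, ?_, ?_, ?_⟩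
  · intro x c
    have hx : (x : A) ⊗ₜ[k] c =
        LinearMap.rTensor C (LinearMap.mulLeft k x) ((1 : A) ⊗ₜ[k] c) := by
      simp
    simp only [LinearMap.comp_apply, LinearEquiv.coe_toLinearMap]
    rw [hx, hel, hcomm, hβl]
  · intro mb' hmb'
    apply TensorProduct.ext'
    intro x c
    rw [hmb' x c]
    have hx : (x : A) ⊗ₜ[k] c =
        LinearMap.rTensor C (LinearMap.mulLeft k x) ((1 : A) ⊗ₜ[k] c) := by
      simp
    simp only [LinearMap.comp_apply, LinearEquiv.coe_toLinearMap]
    rw [hx, hel, hcomm, hβl]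
  · intro u
    simp only [LinearMap.comp_apply, LinearEquiv.coe_toLinearMap]
    have : β u = e u := rfl
    rw [this, e.symm_apply_apply]

end
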